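/- Let n ≥ 3, let ψ : ℝⁿ → ℝ be smooth, set Ψ := (∂ψ/∂x₃)·e₂ − (∂ψ/∂x₂)·e₃, and for k > 0 define u(x) := Ψ(x)·cos(k·x₁). Then div(u ⊗ u) = (1/2)·div(Ψ ⊗ Ψ)·(1 + cos(2k·x₁)) as vector fields on ℝⁿ, where (div(v ⊗ w))ᵢ := Σⱼ ∂(vᵢ wⱼ)/∂xⱼ. -/

import Mathlib

/-- Partial derivative of `f` in the `i`-th coordinate direction. -/
noncomputable def pd {n : ℕ} (i : Fin n) (f : EuclideanSpace ℝ (Fin n) → ℝ)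
    (x : EuclideanSpace ℝ (Fin n)) : ℝ :=
  fderiv ℝ f x (EuclideanSpace.single i 1)

/-- `(div (v ⊗ w))ᵢ = Σⱼ ∂ⱼ (vᵢ wⱼ)`. -/
noncomputable def divT {n : ℕ} (v w : EuclideanSpace ℝ (Fin n) → Fin n → ℝ)
    (x : EuclideanSpace ℝ (Fin n)) (i : Fin n) : ℝ :=
  ∑ j : Fin n, pd j (fun y => v y i * w y j) x

lemma pd_mul {n : ℕ} (j : Fin n) (f g : EuclideanSpace ℝ (Fin n) → ℝ)
    (x : EuclideanSpace ℝ (Fin n)) (hf : DifferentiableAt ℝ f x)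
    (hg : DifferentiableAt ℝ g x) :
    pd j (fun y => f y * g y) x = pd j f x * g x + f x * pd j g x := by
  unfold pd
  rw [fderiv_fun_mul hf hg]
  simp
  ring

theorem stmt3 (n : ℕ) (hn : 3 ≤ n)
    (ψ : EuclideanSpace ℝ (Fin n) → ℝ) (hψ : ContDiff ℝ (⊤ : ℕ∞) ψ)
    (k : ℝ) (hk : 0 < k) :
    let i1 : Fin n := ⟨0, by omega⟩
    let i2 : Fin n := ⟨1, by omega⟩
    let i3 : Fin n := ⟨2, by omega⟩
    let Ψ : EuclideanSpace ℝ (Fin n) → Fin n → ℝ :=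
      fun x j => if j = i2 then pd i3 ψ x else if j = i3 then -(pd i2 ψ x) else 0
    let u : EuclideanSpace ℝ (Fin n) → Fin n → ℝ :=
      fun x j => Ψ x j * Real.cos (k * x i1)
    ∀ (x : EuclideanSpace ℝ (Fin n)) (i : Fin n),
      divT u u x i = (1/2) * divT Ψ Ψ x i * (1 + Real.cos (2 * k * x i1)) := by
  intro i1 i2 i3 Ψ u x i
  have h12 : i1 ≠ i2 := by simp [i1, i2, Fin.ext_iff]
  have h13 : i1 ≠ i3 := by simp [i1, i3, Fin.ext_iff]
  set c : EuclideanSpace ℝ (Fin n) → ℝ := fun y => Real.cos (k * y i1) with hcdef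
  -- differentiability of fderiv applications
  have hpd : ∀ v : EuclideanSpace ℝ (Fin n),
      Differentiable ℝ (fun y => fderiv ℝ ψ y v) := by
    intro v
    exact ((ContinuousLinearMap.apply ℝ ℝ v).contDiff.comp
      (hψ.fderiv_right (m := 1) (by exact WithTop.coe_le_coe.mpr le_top))).differentiable one_ne_zero
  have hΨ : ∀ j : Fin n, Differentiable ℝ (fun y => Ψ y j) := by
    intro j
    simp only [Ψ]
    split_ifs
    · exact hpd _
    · exact (hpd _).neg
    · exact differentiable_const 0
  have hc : Differentiable ℝ c := by
    exact Real.differentiable_cos.comp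
      (((EuclideanSpace.proj i1 : EuclideanSpace ℝ (Fin n) →L[ℝ] ℝ)).differentiable.const_mul k)
  have hpdc : ∀ j : Fin n, j ≠ i1 → pd j c x = 0 := by
    intro j hj
    have hproj : HasFDerivAt (fun y : EuclideanSpace ℝ (Fin n) => k * y i1)
        (k • (EuclideanSpace.proj i1 : EuclideanSpace ℝ (Fin n) →L[ℝ] ℝ)) x :=
      ((EuclideanSpace.proj i1 : EuclideanSpace ℝ (Fin n) →L[ℝ] ℝ)).hasFDerivAt.const_mul k
    have hcc : HasFDerivAt c
        ((-Real.sin (k * x i1)) • (k • (EuclideanSpace.proj i1 :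
            EuclideanSpace ℝ (Fin n) →L[ℝ] ℝ))) x :=
      by have := (Real.hasDerivAt_cos (k * x i1)).comp_hasFDerivAt x hproj; exact this
    unfold pd
    rw [hcc.fderiv]
    simp [EuclideanSpace.single_apply, hj.symm]
  have hΨ1 : Ψ x i1 = 0 := by
    simp only [Ψ, if_neg h12, if_neg h13]
  have key : ∀ j : Fin n, pd j (fun y => u y i * u y j) x =
      pd j (fun y => Ψ y i * Ψ y j) x * (c x * c x) := by
    intro j
    have heq : (fun y => u y i * u y j) =
        fun y => (Ψ y i * Ψ y j) * (c y * c y) := by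
      funext y; simp only [u]; ring
    rw [heq, pd_mul j (fun y => Ψ y i * Ψ y j) (fun y => c y * c y) x (((hΨ i) x).mul ((hΨ j) x)) ((hc x).mul (hc x))]
    have h2 : Ψ x i * Ψ x j * pd j (fun y => c y * c y) x = 0 := by
      by_cases hj : j = i1
      · subst hj; rw [hΨ1]; ring
      · rw [pd_mul j c c x (hc x) (hc x), hpdc j hj]; ring
    rw [h2, add_zero]
  unfold divT
  simp only [key]
  rw [← Finset.sum_mul]
  have hcos : c x * c x = (1 + Real.cos (2 * k * x i1)) / 2 := by
    have h := Real.cos_sq (k * x i1)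
    have h2 : Real.cos (2 * k * x i1) = Real.cos (2 * (k * x i1)) := by rw [mul_assoc]
    simp only [hcdef]
    rw [h2]
    linear_combination h
  rw [hcos]
  ring
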